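/- Let G = (V,E) be a hypergraph and let B be its vertex-weighted bipartite incidence graph (vertices U_V ∪ U_E, with u_v adjacent to u_e iff v ∈ e; weight ∞ on U_V, weight 1 on U_E). Then the minimum weight of a separator in B equals the min-cut capacity of G. Moreover: if (L,S,R) is a minimum-weight separator of B then ({v : u_v ∈ L}, {v : u_v ∈ R}) is a min-cut of G; and if (C, V∖C) is a min-cut of G, then (L,S,R) with L = {u_v : v ∈ C} ∪ {u_e : e ⊆ C}, S = {u_e : e ∈ δ(C)}, R = {u_v : v ∈ V∖C} ∪ {u_e : e ⊆ V∖C} is a minimum-weight separator of B. -/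

import Mathlib

open Finset

variable {V : Type*} [Fintype V] [DecidableEq V]

/-- Capacity of the cut `(C, V∖C)` of the hypergraph. -/
def cutCap (E : Finset (Finset V)) (C : Finset V) : ℕ :=
  (E.filter (fun e => (e ∩ C).Nonempty ∧ (e ∩ Cᶜ).Nonempty)).card

/-- `(C, V∖C)` is a min-cut of the hypergraph. -/
def IsMinCut (E : Finset (Finset V)) (C : Finset V) : Prop :=
  C.Nonempty ∧ Cᶜ.Nonempty ∧
    ∀ D : Finset V, D.Nonempty → Dᶜ.Nonempty → cutCap E C ≤ cutCap E D

/-- Vertex set of the bipartite incidence graph `B` of a hypergraph `(V, E)`. -/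
abbrev BVert (E : Finset (Finset V)) := V ⊕ {e // e ∈ E}

/-- No edge of `B` joins `L` and `R` (edges of `B` are incidences `v ∈ e`). -/
def NoCross (E : Finset (Finset V)) (L R : Finset (BVert E)) : Prop :=
  ∀ (v : V) (e : {e // e ∈ E}), v ∈ e.1 →
    ¬(Sum.inl v ∈ L ∧ Sum.inr e ∈ R) ∧ ¬(Sum.inl v ∈ R ∧ Sum.inr e ∈ L)

/-- `(L,S,R)` is a separator of `B`. -/
def IsSeparator (E : Finset (Finset V)) (L S R : Finset (BVert E)) : Prop :=
  Disjoint L S ∧ Disjoint L R ∧ Disjoint S R ∧ L ∪ S ∪ R = Finset.univ ∧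
    (∃ v : V, Sum.inl v ∈ L) ∧ (∃ v : V, Sum.inl v ∈ R) ∧ NoCross E L R

/-- Weight of a set of vertices of `B`: `∞` on `U_V`, `1` on `U_E`. -/
def sepWeight (E : Finset (Finset V)) (S : Finset (BVert E)) : ℕ∞ :=
  ∑ x ∈ S, Sum.elim (fun _ => (⊤ : ℕ∞)) (fun _ => 1) x

/-- The separator side `L` built from a cut `(C, V∖C)`:
`{u_v : v ∈ C} ∪ {u_e : e ⊆ C}`. -/
def mkL (E : Finset (Finset V)) (C : Finset V) : Finset (BVert E) :=
  C.image Sum.inl ∪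
    ((Finset.univ : Finset {e // e ∈ E}).filter (fun e => e.1 ⊆ C)).image Sum.inr

/-- The separator middle `S` built from a cut: `{u_e : e ∈ δ(C)}`. -/
def mkS (E : Finset (Finset V)) (C : Finset V) : Finset (BVert E) :=
  ((Finset.univ : Finset {e // e ∈ E}).filter
    (fun e => (e.1 ∩ C).Nonempty ∧ (e.1 ∩ Cᶜ).Nonempty)).image Sum.inr

/-- The separator side `R` built from a cut:
`{u_v : v ∈ V∖C} ∪ {u_e : e ⊆ V∖C}`. -/
def mkR (E : Finset (Finset V)) (C : Finset V) : Finset (BVert E) :=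
  Cᶜ.image Sum.inl ∪
    ((Finset.univ : Finset {e // e ∈ E}).filter (fun e => e.1 ⊆ Cᶜ)).image Sum.inr

/-!
A vertex `u_v` costs `∞` in a separator and an edge vertex `u_e` costs `1`. If a separator
`(L, S, R)` has finite weight, every `u_v` lies in `L` or `R`, so every hyperedge meeting both
`{v : u_v ∈ L}` and its complement has neighbours in `L` and in `R` and must lie in `S`: the
capacity of that cut is at most the weight of `S`. Conversely the separator
`(mkL C, mkS C, mkR C)` built from a cut `C` has weight exactly the capacity of `C`. Together the
two inequalities make minimum separators and min-cuts correspond.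
-/

lemma Finset.inter_nonempty_iff_not_subset_compl {α : Type*} [Fintype α] [DecidableEq α]
    {s t : Finset α} : (s ∩ t).Nonempty ↔ ¬s ⊆ tᶜ := by
  rw [subset_compl_iff_disjoint_right, not_disjoint_iff_nonempty_inter]

section Weight

variable {E : Finset (Finset V)} {S : Finset (BVert E)}

omit [Fintype V] [DecidableEq V] in
lemma sepWeight_eq_top_of_inl_mem {v : V} (hv : Sum.inl v ∈ S) : sepWeight E S = ⊤ :=
  top_le_iff.mp (single_le_sum (f := Sum.elim (fun _ => (⊤ : ℕ∞)) fun _ => 1)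
    (fun _ _ => zero_le) hv)

omit [Fintype V] [DecidableEq V] in
lemma sepWeight_eq_card (hS : ∀ v : V, Sum.inl v ∉ S) : sepWeight E S = #S := by
  rw [sepWeight, sum_congr rfl fun x hx => ?_, sum_const, nsmul_one]
  cases x with
  | inl v => exact absurd hx (hS v)
  | inr e => rfl

end Weight

lemma cutCap_eq_card_subtype (E : Finset (Finset V)) (C : Finset V) :
    cutCap E C =
      #(univ.filter fun e : {e // e ∈ E} => (e.1 ∩ C).Nonempty ∧ (e.1 ∩ Cᶜ).Nonempty) := by
  rw [univ_eq_attach, filter_attach (fun e => (e ∩ C).Nonempty ∧ (e ∩ Cᶜ).Nonempty), card_map,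
    card_attach, cutCap]

section Construction

variable {E : Finset (Finset V)} {C : Finset V}

omit [Fintype V] in
@[simp]
lemma inl_mem_mkL {v : V} : (Sum.inl v : BVert E) ∈ mkL E C ↔ v ∈ C := by
  simp [mkL]

omit [Fintype V] in
@[simp]
lemma inr_mem_mkL {e : {e // e ∈ E}} : (Sum.inr e : BVert E) ∈ mkL E C ↔ e.1 ⊆ C := by
  simp [mkL]

@[simp]
lemma inl_notMem_mkS {v : V} : (Sum.inl v : BVert E) ∉ mkS E C := by
  simp [mkS]

@[simp]
lemma inr_mem_mkS {e : {e // e ∈ E}} :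
    (Sum.inr e : BVert E) ∈ mkS E C ↔ ¬e.1 ⊆ Cᶜ ∧ ¬e.1 ⊆ C := by
  simp [mkS, inter_nonempty_iff_not_subset_compl]

lemma mkR_eq_mkL_compl : mkR E C = mkL E Cᶜ := rfl

lemma sepWeight_mkS (C : Finset V) : sepWeight E (mkS E C) = cutCap E C := by
  rw [sepWeight_eq_card fun _ => inl_notMem_mkS, cutCap_eq_card_subtype, mkS,
    card_image_of_injective _ Sum.inr_injective]

lemma isSeparator_mk (hne : ∀ e ∈ E, e.Nonempty) (hC : C.Nonempty) (hCc : Cᶜ.Nonempty) :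
    IsSeparator E (mkL E C) (mkS E C) (mkR E C) := by
  have hsplit : ∀ e : {e // e ∈ E}, e.1 ⊆ C → ¬e.1 ⊆ Cᶜ := fun e h hc => by
    obtain ⟨v, hv⟩ := hne e e.2
    exact mem_compl.1 (hc hv) (h hv)
  obtain ⟨v, hv⟩ := hC
  obtain ⟨w, hw⟩ := hCc
  simp only [IsSeparator, NoCross, disjoint_left, eq_univ_iff_forall, mem_union, Sum.forall,
    mkR_eq_mkL_compl, inl_mem_mkL, inr_mem_mkL, inr_mem_mkS, mem_compl]
  refine ⟨⟨by simp, by tauto⟩, ⟨by tauto, fun e h => hsplit e h⟩, ⟨by simp, by tauto⟩,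
    ⟨by tauto, by tauto⟩, ⟨v, hv⟩, ⟨w, mem_compl.1 hw⟩, fun u e hu => ⟨?_, ?_⟩⟩
  · exact fun h => mem_compl.1 (h.2 hu) h.1
  · exact fun h => h.1 (h.2 hu)

end Construction

def vertexPart {E : Finset (Finset V)} (L : Finset (BVert E)) : Finset V :=
  univ.filter fun v => Sum.inl v ∈ L

namespace IsSeparator

variable {E : Finset (Finset V)} {L S R : Finset (BVert E)}

lemma mem_cases (h : IsSeparator E L S R) (x : BVert E) : x ∈ L ∨ x ∈ S ∨ x ∈ R := by
  have hx : x ∈ L ∪ S ∪ R := h.2.2.2.1 ▸ mem_univ x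
  simpa only [mem_union, or_assoc] using hx

lemma vertexPart_nonempty (h : IsSeparator E L S R) : (vertexPart L).Nonempty :=
  let ⟨v, hv⟩ := h.2.2.2.2.1
  ⟨v, mem_filter.2 ⟨mem_univ v, hv⟩⟩

lemma compl_vertexPart_nonempty (h : IsSeparator E L S R) : (vertexPart L)ᶜ.Nonempty :=
  let ⟨w, hw⟩ := h.2.2.2.2.2.1
  ⟨w, by simpa [vertexPart] using fun hwL => disjoint_left.1 h.2.1 hwL hw⟩

lemma inr_mem_of_crossing (h : IsSeparator E L S R) (hS : ∀ v : V, Sum.inl v ∉ S)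
    {e : {e // e ∈ E}} (he : (e.1 ∩ vertexPart L).Nonempty ∧ (e.1 ∩ (vertexPart L)ᶜ).Nonempty) :
    Sum.inr e ∈ S := by
  obtain ⟨⟨v, hv⟩, ⟨w, hw⟩⟩ := he
  simp only [vertexPart, mem_inter, mem_compl, mem_filter, mem_univ, true_and] at hv hw
  have hwR : Sum.inl w ∈ R := by
    rcases h.mem_cases (Sum.inl w) with hL | hS' | hR
    exacts [absurd hL hw.2, absurd hS' (hS w), hR]
  rcases h.mem_cases (Sum.inr e) with hL | hS' | hR
  exacts [absurd ⟨hwR, hL⟩ (h.2.2.2.2.2.2 w e hw.1).2, hS',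
    absurd ⟨hv.2, hR⟩ (h.2.2.2.2.2.2 v e hv.1).1]

lemma cutCap_vertexPart_le_sepWeight (h : IsSeparator E L S R) :
    (cutCap E (vertexPart L) : ℕ∞) ≤ sepWeight E S := by
  by_cases hS : ∃ v : V, Sum.inl v ∈ S
  · obtain ⟨v, hv⟩ := hS
    rw [sepWeight_eq_top_of_inl_mem hv]
    exact le_top
  push Not at hS
  rw [sepWeight_eq_card hS, cutCap_eq_card_subtype, Nat.cast_le]
  exact card_le_card_of_injOn Sum.inr (fun e he => h.inr_mem_of_crossing hS (mem_filter.1 he).2)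
    Sum.inr_injective.injOn

end IsSeparator

namespace IsMinCut

variable {E : Finset (Finset V)} {C : Finset V}

lemma cutCap_le_sepWeight (hC : IsMinCut E C) {L S R : Finset (BVert E)}
    (hs : IsSeparator E L S R) : (cutCap E C : ℕ∞) ≤ sepWeight E S :=
  (Nat.cast_le.2 (hC.2.2 _ hs.vertexPart_nonempty hs.compl_vertexPart_nonempty)).trans
    hs.cutCap_vertexPart_le_sepWeight

lemma of_cutCap_le (hC : IsMinCut E C) {D : Finset V} (hD : D.Nonempty) (hDc : Dᶜ.Nonempty)
    (h : cutCap E D ≤ cutCap E C) : IsMinCut E D :=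
  ⟨hD, hDc, fun D' hD' hD'c => h.trans (hC.2.2 D' hD' hD'c)⟩

end IsMinCut

theorem separator_iff_min_cut_general
    (E : Finset (Finset V)) (hne : ∀ e ∈ E, e.Nonempty)
    (C₀ : Finset V) (hC₀ : IsMinCut E C₀) :
    (∀ L S R : Finset (BVert E), IsSeparator E L S R →
        (∀ L' S' R' : Finset (BVert E), IsSeparator E L' S' R' →
          sepWeight E S ≤ sepWeight E S') →
        sepWeight E S = (cutCap E C₀ : ℕ∞) ∧
          IsMinCut E (Finset.univ.filter (fun v : V => Sum.inl v ∈ L))) ∧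
      (∀ C : Finset V, IsMinCut E C →
        IsSeparator E (mkL E C) (mkS E C) (mkR E C) ∧
          ∀ L' S' R' : Finset (BVert E), IsSeparator E L' S' R' →
            sepWeight E (mkS E C) ≤ sepWeight E S') := by
  refine ⟨fun L S R hs hmin => ?_, fun C hC => ⟨isSeparator_mk hne hC.1 hC.2.1, ?_⟩⟩
  · have hupper : sepWeight E S ≤ cutCap E C₀ :=
      sepWeight_mkS (E := E) C₀ ▸ hmin _ _ _ (isSeparator_mk hne hC₀.1 hC₀.2.1)
    have hcut : (cutCap E (vertexPart L) : ℕ∞) ≤ cutCap E C₀ :=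
      hs.cutCap_vertexPart_le_sepWeight.trans hupper
    exact ⟨le_antisymm hupper (hC₀.cutCap_le_sepWeight hs), hC₀.of_cutCap_le
      hs.vertexPart_nonempty hs.compl_vertexPart_nonempty (by exact_mod_cast hcut)⟩
  · intro L' S' R' hs
    rw [sepWeight_mkS]
    exact hC.cutCap_le_sepWeight hs

/-- The minimum separator weight of `B` equals the min-cut capacity
of `G`; a minimum-weight separator `(L,S,R)` yields the min-cut
`({v : u_v ∈ L}, {v : u_v ∈ R})`; and any min-cut `(C, V∖C)` yields a
minimum-weight separator `(mkL, mkS, mkR)`. -/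
theorem separator_iff_min_cut
    (E : Finset (Finset V)) (hne : ∀ e ∈ E, e.Nonempty)
    (hV : 2 ≤ Fintype.card V)
    (C₀ : Finset V) (hC₀ : IsMinCut E C₀) :
    (∀ L S R : Finset (BVert E), IsSeparator E L S R →
        (∀ L' S' R' : Finset (BVert E), IsSeparator E L' S' R' →
          sepWeight E S ≤ sepWeight E S') →
        sepWeight E S = (cutCap E C₀ : ℕ∞) ∧
          IsMinCut E (Finset.univ.filter (fun v : V => Sum.inl v ∈ L))) ∧
      (∀ C : Finset V, IsMinCut E C →
        IsSeparator E (mkL E C) (mkS E C) (mkR E C) ∧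
          ∀ L' S' R' : Finset (BVert E), IsSeparator E L' S' R' →
            sepWeight E (mkS E C) ≤ sepWeight E S') :=
  separator_iff_min_cut_general E hne C₀ hC₀
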